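/- Let V be an irreducible module for J ⊕ D (J = G_aff ⊗ A_{n-1}) with finite-dimensional weight spaces, admitting an invertible central operator z_1 of degree (k_1,0,...,0) with k_1 > 0. Then { z_1 v − v : v ∈ V } is a proper nonzero J ⊕ D_1-submodule of V; in particular V is reducible as a J ⊕ D_1-module. -/
import Mathlib

noncomputable section

variable {L : Type*} [LieRing L] [LieAlgebra ℂ L]

/-- Weight space of a module for a weight `χ` with respect to a set `Hset` of
commuting Cartan elements. -/
def wtSp (Hset : Set L)
    (V : Type*) [AddCommGroup V] [Module ℂ V] [LieRingModule L V] [LieModule ℂ L V]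
    (χ : L → ℂ) : Submodule ℂ V :=
  ⨅ x ∈ Hset, Module.End.eigenspace (LieModule.toEnd ℂ L V x) (χ x)

/-- A finite sum of elements of an independent family of submodules is zero only if
each term is zero. -/
lemma eq_zero_of_sum_eq_zero_of_iSupIndep {ι V : Type*} [AddCommGroup V] [Module ℂ V]
    (E : ι → Submodule ℂ V) (hE : iSupIndep E) (s : Finset ι) (u : ι → V)
    (hu : ∀ i ∈ s, u i ∈ E i) (hsum : ∑ i ∈ s, u i = 0) : ∀ i ∈ s, u i = 0 := by
  classical
  intro i hi
  have h1 : u i = -∑ j ∈ s.erase i, u j := by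
    have h := Finset.sum_erase_add s u hi
    rw [hsum] at h
    exact eq_neg_of_add_eq_zero_right h
  have h2 : u i ∈ ⨆ (j) (_ : j ≠ i), E j := by
    rw [h1]
    refine neg_mem (Submodule.sum_mem _ fun j hj => ?_)
    have hji : j ≠ i := (Finset.mem_erase.mp hj).1
    exact Submodule.mem_iSup_of_mem j (Submodule.mem_iSup_of_mem hji (hu j (Finset.mem_erase.mp hj).2))
  exact (Submodule.disjoint_def.mp (hE i)) _ (hu i hi) h2

/-- Let `V` be an irreducible module for `J ⊕ D`
(`J = G_aff ⊗ A_{n-1}`) with finite-dimensional weight spaces, admitting an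
invertible central operator `z₁` of degree `(k₁, 0, …, 0)` with `k₁ > 0`.  Then
`{z₁ v − v : v ∈ V}` is a proper nonzero `J ⊕ D₁`-submodule of `V`; in particular
`V` is reducible as a `J ⊕ D₁`-module.  Here `L` plays the role of `J ⊕ D`, `d1`
is the derivation `d₁`, and the Lie subalgebra `L₁` plays the role of `J ⊕ D₁`,
so that `L = ℂ d₁ ⊕ L₁`. -/
theorem z_shift_gives_proper_submodule
    (d1 : L) (L₁ : LieSubalgebra ℂ L)
    (hsplit : ∀ x : L, ∃ (c : ℂ) (y : L₁), x = c • d1 + (y : L))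
    (hd1 : d1 ∉ L₁)
    (V : Type*) [AddCommGroup V] [Module ℂ V] [LieRingModule L V] [LieModule ℂ L V]
    [LieModule.IsIrreducible ℂ L V]
    (Hset : Set L) (hd1H : d1 ∈ Hset)
    (hwt : (⨆ χ : L → ℂ, wtSp Hset V χ) = ⊤)
    (hfd : ∀ χ : L → ℂ, FiniteDimensional ℂ (wtSp Hset V χ))
    (z₁ : Module.End ℂ V) (z₁inv : Module.End ℂ V)
    (hinv₁ : z₁ * z₁inv = 1) (hinv₂ : z₁inv * z₁ = 1)
    (hcomm : ∀ x : L₁, ∀ v : V, z₁ ⁅(x : L), v⁆ = ⁅(x : L), z₁ v⁆)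
    (k₁ : ℕ) (hk₁ : 0 < k₁)
    (hdeg : (LieModule.toEnd ℂ L V d1) * z₁ - z₁ * (LieModule.toEnd ℂ L V d1)
      = (k₁ : ℂ) • z₁) :
    LinearMap.range (z₁ - LinearMap.id) ≠ ⊥ ∧
    LinearMap.range (z₁ - LinearMap.id) ≠ ⊤ ∧
    (∀ x : L₁, ∀ v ∈ LinearMap.range (z₁ - LinearMap.id),
      ⁅(x : L), v⁆ ∈ LinearMap.range (z₁ - LinearMap.id)) := by
  classical
  set D := LieModule.toEnd ℂ L V d1 with hDdef
  set k : ℂ := (k₁ : ℂ) with hkdef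
  have hk : k ≠ 0 := by
    simp only [hkdef, Ne, Nat.cast_eq_zero]
    omega
  -- z₁ is injective
  have hzinj : Function.Injective z₁ := by
    intro a b hab
    have h : z₁inv (z₁ a) = z₁inv (z₁ b) := by rw [hab]
    rw [← Module.End.mul_apply, ← Module.End.mul_apply, hinv₂] at h
    simpa using h
  -- V is nontrivial
  have hnt : Nontrivial V := by
    by_contra h
    have hss : Subsingleton V := not_nontrivial_iff_subsingleton.mp h
    have : (⊥ : LieSubmodule ℂ L V) = ⊤ := by
      apply LieSubmodule.ext
      intro x
      simp [Subsingleton.elim x 0]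
    exact (IsSimpleOrder.bot_ne_top : (⊥ : LieSubmodule ℂ L V) ≠ ⊤) this
  -- z₁ shifts eigenvalues of D by k
  have hmap : ∀ (μ : ℂ) (u : V), u ∈ Module.End.eigenspace D μ →
      z₁ u ∈ Module.End.eigenspace D (μ + k) := by
    intro μ u hu
    rw [Module.End.mem_eigenspace_iff] at hu ⊢
    have h1 : (D * z₁ - z₁ * D) u = (k • z₁) u := by rw [hdeg]
    simp only [LinearMap.sub_apply, Module.End.mul_apply, LinearMap.smul_apply] at h1
    have h2 : D (z₁ u) = k • z₁ u + z₁ (D u) := eq_add_of_sub_eq h1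
    rw [h2, hu, map_smul, add_smul]
    abel
  -- eigenspaces of D span V
  have hEsup : (⨆ μ : ℂ, Module.End.eigenspace D μ) = ⊤ := by
    rw [eq_top_iff, ← hwt]
    apply iSup_le
    intro χ
    refine le_trans ?_ (le_iSup _ (χ d1))
    exact iInf₂_le d1 hd1H
  have hEindep : iSupIndep (Module.End.eigenspace D) := D.eigenspaces_iSupIndep
  refine ⟨?_, ?_, ?_⟩
  · -- range ≠ ⊥
    intro hbot
    rw [LinearMap.range_eq_bot] at hbot
    have hz1 : z₁ = LinearMap.id := by
      have := sub_eq_zero.mp hbot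
      exact this
    obtain ⟨v, hv⟩ := exists_ne (0 : V)
    have h0 : (D * z₁ - z₁ * D) v = (k • z₁) v := by rw [hdeg]
    rw [hz1] at h0
    simp only [LinearMap.sub_apply, Module.End.mul_apply, LinearMap.id_coe, id_eq,
      LinearMap.smul_apply] at h0
    have hz : k • v = 0 := by rw [← h0, sub_self]
    exact hv (by simpa [smul_eq_zero, hk] using hz)
  · -- range ≠ ⊤ : the main argument
    intro htop
    -- pick a nonzero eigenvector v of D with eigenvalue μ
    have hex : ∃ μ : ℂ, Module.End.eigenspace D μ ≠ ⊥ := by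
      by_contra h
      push_neg at h
      have : (⨆ μ : ℂ, Module.End.eigenspace D μ) = (⊥ : Submodule ℂ V) := by
        simp [h]
      rw [hEsup] at this
      obtain ⟨v, hv⟩ := exists_ne (0 : V)
      exact hv (by simpa using (this ▸ Submodule.mem_top : v ∈ (⊥ : Submodule ℂ V)))
    obtain ⟨μ, hμ⟩ := hex
    obtain ⟨v, hvE, hv0⟩ := (Submodule.ne_bot_iff _).mp hμ
    -- get preimage w with z₁ w - w = v
    have hvmem : v ∈ LinearMap.range (z₁ - LinearMap.id) := htop ▸ Submodule.mem_top
    obtain ⟨w, hw⟩ := hvmem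
    simp only [LinearMap.sub_apply, LinearMap.id_coe, id_eq] at hw
    -- decompose w into eigencomponents
    have hwmem : w ∈ ⨆ μ : ℂ, Module.End.eigenspace D μ := hEsup ▸ Submodule.mem_top
    obtain ⟨f, hf, hfsum⟩ := (Submodule.mem_iSup_iff_exists_finsupp _ _).mp hwmem
    -- the componentwise equation
    set g : ℂ → V := fun lam => z₁ (f (lam - k)) - f lam - (if lam = μ then v else 0) with hgdef
    have hgE : ∀ lam : ℂ, g lam ∈ Module.End.eigenspace D lam := by
      intro lam
      refine sub_mem (sub_mem ?_ (hf lam)) ?_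
      · have := hmap (lam - k) (f (lam - k)) (hf (lam - k))
        simpa using this
      · split_ifs with h
        · exact h ▸ hvE
        · exact zero_mem _
    set s : Finset ℂ := f.support ∪ f.support.image (· + k) ∪ {μ} with hsdef
    have hgs : ∀ lam ∉ s, g lam = 0 := by
      intro lam hlam
      simp only [hsdef, Finset.mem_union, Finset.mem_singleton, Finset.mem_image,
        Finsupp.mem_support_iff, not_or, not_exists, not_and] at hlam
      obtain ⟨⟨h1, h2⟩, h3⟩ := hlam
      have hfk : f (lam - k) = 0 := by
        by_contra h
        exact h2 (lam - k) h (by ring)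
      have hfl : f lam = 0 := not_not.mp h1
      simp [hgdef, hfk, hfl, h3]
    have hsumg : ∑ lam ∈ s, g lam = 0 := by
      have hsub1 : f.support ⊆ s := by
        intro x hx; simp [hsdef, hx]
      have hA : ∑ lam ∈ s, f lam = w := by
        rw [← hfsum, Finsupp.sum]
        exact (Finset.sum_subset hsub1 (fun x _ hx => by
          simpa using Finsupp.notMem_support_iff.mp hx)).symm
      have hinjshift : Function.Injective (fun x : ℂ => x - k) :=
        fun a b hab => by simpa using hab
      have hsub2 : f.support ⊆ s.image (· - k) := by
        intro x hx
        rw [Finset.mem_image]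
        refine ⟨x + k, ?_, by ring⟩
        have hxk : x + k ∈ f.support.image (· + k) := Finset.mem_image.mpr ⟨x, hx, rfl⟩
        simp only [hsdef, Finset.mem_union]
        exact Or.inl (Or.inr hxk)
      have hB : ∑ lam ∈ s, f (lam - k) = w := by
        rw [show (∑ lam ∈ s, f (lam - k)) = ∑ x ∈ s.image (· - k), f x from
          (Finset.sum_image (fun a _ b _ h => hinjshift h)).symm]
        rw [← hfsum, Finsupp.sum]
        exact (Finset.sum_subset hsub2 (fun x _ hx =>
          Finsupp.notMem_support_iff.mp hx)).symm
      have hμs : μ ∈ s := by simp [hsdef]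
      have hC : ∑ lam ∈ s, (if lam = μ then v else 0) = v := by
        rw [Finset.sum_ite_eq' s μ (fun _ => v)]
        simp [hμs]
      simp only [hgdef]
      rw [Finset.sum_sub_distrib, Finset.sum_sub_distrib, ← map_sum, hB, hA, hC, hw]
      abel
    have hg0 : ∀ lam : ℂ, g lam = 0 := by
      intro lam
      by_cases h : lam ∈ s
      · exact eq_zero_of_sum_eq_zero_of_iSupIndep _ hEindep s g (fun i _ => hgE i) hsumg lam h
      · exact hgs lam h
    have hgeq : ∀ lam : ℂ, z₁ (f (lam - k)) - f lam = if lam = μ then v else 0 := by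
      intro lam
      have h := hg0 lam
      simp only [hgdef] at h
      exact sub_eq_zero.mp h
    -- the sequence of components along the k-orbit of μ
    set a : ℤ → V := fun m => f (μ + (m : ℂ) * k) with hadef
    have hrec : ∀ m : ℤ, z₁ (a (m - 1)) - a m = if m = 0 then v else 0 := by
      intro m
      have h1 := hgeq (μ + (m : ℂ) * k)
      have h2 : μ + (m : ℂ) * k - k = μ + ((m - 1 : ℤ) : ℂ) * k := by push_cast; ring
      have h3 : (μ + (m : ℂ) * k = μ) ↔ m = 0 := by
        constructor
        · intro h
          have : (m : ℂ) * k = 0 := by linear_combination h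
          rcases mul_eq_zero.mp this with h | h
          · exact_mod_cast h
          · exact absurd h hk
        · rintro rfl; simp
      rw [h2] at h1
      simpa only [hadef, h3] using h1
    -- finiteness of the support of a
    have hfin : {m : ℤ | a m ≠ 0}.Finite := by
      have hinj : Function.Injective (fun m : ℤ => μ + (m : ℂ) * k) := by
        intro m n hmn
        simp only at hmn
        have : (m : ℂ) * k = (n : ℂ) * k := by linear_combination hmn
        have := mul_right_cancel₀ hk this
        exact_mod_cast this
      have hsubset : {m : ℤ | a m ≠ 0} ⊆ (fun m : ℤ => μ + (m : ℂ) * k) ⁻¹' (f.support : Set ℂ) := by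
        intro m hm
        simp only [Set.mem_preimage, Finset.mem_coe, Finsupp.mem_support_iff]
        exact hm
      exact Set.Finite.subset ((f.support : Set ℂ).toFinite.preimage hinj.injOn) hsubset
    -- vanishing below a bound
    obtain ⟨B, hB⟩ := hfin.bddBelow
    have hBlow : ∀ m : ℤ, m < B → a m = 0 := by
      intro m hm
      by_contra h
      exact absurd (hB h) (not_le.mpr hm)
    -- negative components vanish
    have hneg_aux : ∀ (j : ℕ) (m : ℤ), m < 0 → a m = (z₁ ^ j) (a (m - j)) := by
      intro j
      induction j with
      | zero => intro m _; simp
      | succ j ih =>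
        intro m hm
        have h1 : a m = z₁ (a (m - 1)) := by
          have h := hrec m
          rw [if_neg hm.ne] at h
          exact (sub_eq_zero.mp h).symm
        have h2 := ih (m - 1) (by omega)
        have h3 : (m - 1) - (j : ℤ) = m - ((j + 1 : ℕ) : ℤ) := by push_cast; ring
        rw [h3] at h2
        rw [h1, h2, ← Module.End.mul_apply, ← pow_succ']
    have hneg : ∀ m : ℤ, m < 0 → a m = 0 := by
      intro m hm
      obtain ⟨j, hj⟩ : ∃ j : ℕ, m - (j : ℤ) < B := ⟨(m - B).toNat + 1, by omega⟩
      rw [hneg_aux j m hm, hBlow _ hj, map_zero]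
    have ha0 : a 0 = -v := by
      have h := hrec 0
      rw [if_pos rfl] at h
      rw [hneg (0 - 1) (by omega), map_zero, zero_sub] at h
      exact neg_eq_iff_eq_neg.mp h
    have hpos : ∀ m : ℕ, a m = (z₁ ^ m) (a 0) := by
      intro m
      induction m with
      | zero => simp
      | succ m ih =>
        have h := hrec ((m : ℤ) + 1)
        rw [if_neg (by omega)] at h
        have h2 : ((m : ℤ) + 1) - 1 = (m : ℤ) := by ring
        rw [h2] at h
        have h1 : a ((m : ℤ) + 1) = z₁ (a m) := (sub_eq_zero.mp h).symm
        have hcast : ((m + 1 : ℕ) : ℤ) = (m : ℤ) + 1 := by push_cast; ring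
        rw [hcast, h1, ih, ← Module.End.mul_apply, ← pow_succ']
    have hpowinj : ∀ m : ℕ, Function.Injective (z₁ ^ m : Module.End ℂ V) := by
      intro m
      induction m with
      | zero => intro x y hxy; simpa using hxy
      | succ m ih =>
        rw [pow_succ]
        intro x y hxy
        simp only [Module.End.mul_apply] at hxy
        exact hzinj (ih hxy)
    have hane : ∀ m : ℕ, a m ≠ 0 := by
      intro m h
      rw [hpos m, ha0] at h
      have : (-v : V) = 0 := hpowinj m (by simpa using h)
      exact hv0 (by simpa using this)
    obtain ⟨U, hU⟩ := hfin.bddAbove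
    have hcontra : ((U.toNat + 1 : ℕ) : ℤ) ≤ U := hU (hane (U.toNat + 1))
    omega
  · -- L₁-invariance
    rintro x v ⟨u, rfl⟩
    refine ⟨⁅(x : L), u⁆, ?_⟩
    simp only [LinearMap.sub_apply, LinearMap.id_coe, id_eq]
    rw [hcomm, ← lie_sub]

end
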